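/- arXiv:2512.23348 — 2 statements merged into one kernel-verified Lean document; each statement's English description precedes it below -/
import Mathlib

section
/- Let X be a finite topological space with specialization preorder ≤, and define x ∼ y iff x ≤ y and y ≤ x. Then the quotient space X/∼ with the quotient topology is a T0 space and the quotient map X → X/∼ is a homotopy equivalence. -/
/-- The specialization preorder relation: `x ≤ y` iff `x` lies in every open set
containing `y`. -/
def specLe {X : Type*} [TopologicalSpace X] (x y : X) : Prop :=
  ∀ U : Set X, IsOpen U → y ∈ U → x ∈ U

/-- The setoid identifying `x ∼ y` iff `x ≤ y` and `y ≤ x` in the specialization preorder. -/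
def specSetoid (X : Type*) [TopologicalSpace X] : Setoid X where
  r x y := specLe x y ∧ specLe y x
  iseqv := by
    constructor
    · exact fun x => ⟨fun U _ h => h, fun U _ h => h⟩
    · exact fun h => ⟨h.2, h.1⟩
    · exact fun h₁ h₂ =>
        ⟨fun U hU h => h₁.1 U hU (h₂.1 U hU h), fun U hU h => h₂.2 U hU (h₁.2 U hU h)⟩

lemma specSetoid_eq (X : Type*) [TopologicalSpace X] :
    specSetoid X = inseparableSetoid X := by
  ext x y
  show (specLe x y ∧ specLe y x) ↔ Inseparable x y
  rw [inseparable_iff_specializes_and, specializes_iff_forall_open,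
    specializes_iff_forall_open]
  exact Iff.rfl

section Sep

variable {X : Type*} [TopologicalSpace X]

open SeparationQuotient in
/-- A continuous section of the separation quotient map. -/
noncomputable def sepSection (X : Type*) [TopologicalSpace X] :
    C(SeparationQuotient X, X) where
  toFun q := Quotient.out q
  continuous_toFun := by
    rw [continuous_def]
    intro U hU
    have : (fun q : SeparationQuotient X => Quotient.out q) ⁻¹' U = mk '' U := by
      ext q
      constructor
      · intro hq
        exact ⟨Quotient.out q, hq, Quotient.out_eq q⟩
      · rintro ⟨x, hx, rfl⟩
        have : Inseparable x (Quotient.out (mk x)) :=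
          mk_eq_mk.1 (Quotient.out_eq (mk x)).symm
        exact (this.mem_open_iff hU).1 hx
    rw [this]
    exact isOpenMap_mk U hU

lemma sepSection_mk_inseparable (x : X) :
    Inseparable (sepSection X (SeparationQuotient.mk x)) x := by
  refine SeparationQuotient.mk_eq_mk.1 ?_
  exact Quotient.out_eq _

open SeparationQuotient in
/-- The separation quotient map is a homotopy equivalence. -/
noncomputable def sepHomotopyEquiv (X : Type*) [TopologicalSpace X] :
    ContinuousMap.HomotopyEquiv X (SeparationQuotient X) where
  toFun := ⟨mk, continuous_mk⟩
  invFun := sepSection X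
  left_inv := by
    refine ⟨⟨⟨fun p => if p.1 = (1 : unitInterval) then p.2 else sepSection X (mk p.2), ?_⟩,
      ?_, ?_⟩⟩
    · rw [continuous_def]
      intro U hU
      have key : ∀ x : X, sepSection X (mk x) ∈ U ↔ x ∈ U := fun x =>
        (sepSection_mk_inseparable x).mem_open_iff hU
      have : (fun p : unitInterval × X =>
          if p.1 = (1 : unitInterval) then p.2 else sepSection X (mk p.2)) ⁻¹' U =
          Prod.snd ⁻¹' U := by
        ext ⟨t, x⟩
        by_cases ht : t = (1 : unitInterval) <;> simp [ht, key]
      rw [this]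
      exact hU.preimage continuous_snd
    · intro x
      simp
    · intro x
      simp
  right_inv := by
    have : (ContinuousMap.mk mk continuous_mk).comp (sepSection X) =
        ContinuousMap.id (SeparationQuotient X) := by
      ext q
      exact Quotient.out_eq q
    rw [this]

end Sep

theorem stmt5 {X : Type*} [TopologicalSpace X] [Finite X] :
    T0Space (Quotient (specSetoid X)) ∧
    ∃ e : ContinuousMap.HomotopyEquiv X (Quotient (specSetoid X)),
      ⇑e.toFun = Quotient.mk (specSetoid X) := by
  rw [specSetoid_eq X]
  constructor
  · exact SeparationQuotient.instT0Space
  · exact ⟨sepHomotopyEquiv X, rfl⟩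
end

section
/- Let V and W be persistence modules over (ℝ, ≤) and suppose there exist natural transformations φ : V ⇒ W(ε) and ψ : W ⇒ V(ε) (where W(ε) denotes the ε-shift) such that the composite ψ(ε) ∘ φ : V ⇒ V(2ε) equals the canonical structure natural transformation V ⇒ V(2ε), and symmetrically for W. Then for every t ≤ s with s − t ≥ 2ε, rank V(t ≤ s) ≤ rank W(t + ε ≤ s − ε). -/
open CategoryTheory

theorem stmt19 {k : Type} [Field k] (ε : ℝ) (hε : 0 ≤ ε)
    (V W : ℝ ⥤ ModuleCat k)
    [∀ t : ℝ, FiniteDimensional k (V.obj t)] [∀ t : ℝ, FiniteDimensional k (W.obj t)]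
    (φ : ∀ t : ℝ, V.obj t ⟶ W.obj (t + ε))
    (ψ : ∀ t : ℝ, W.obj t ⟶ V.obj (t + ε))
    (hφnat : ∀ (t s : ℝ) (h : t ≤ s),
      φ t ≫ W.map (homOfLE (by linarith : t + ε ≤ s + ε)) = V.map (homOfLE h) ≫ φ s)
    (hψnat : ∀ (t s : ℝ) (h : t ≤ s),
      ψ t ≫ V.map (homOfLE (by linarith : t + ε ≤ s + ε)) = W.map (homOfLE h) ≫ ψ s)
    (hVW : ∀ t : ℝ,
      φ t ≫ ψ (t + ε) = V.map (homOfLE (by linarith : t ≤ t + ε + ε)))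
    (hWV : ∀ t : ℝ,
      ψ t ≫ φ (t + ε) = W.map (homOfLE (by linarith : t ≤ t + ε + ε))) :
    ∀ (t s : ℝ) (hts : t ≤ s) (h2ε : s - t ≥ 2 * ε),
      Module.finrank k ↥(LinearMap.range (V.map (homOfLE hts)).hom) ≤
      Module.finrank k ↥(LinearMap.range
        (W.map (homOfLE (show t + ε ≤ s - ε by linarith))).hom) := by
  intro t s hts h2ε
  have h1 : t + ε ≤ s - ε := by linarith
  have e : V.obj (s - ε + ε) = V.obj s := by norm_num
  have key : V.map (homOfLE hts) =
      φ t ≫ W.map (homOfLE h1) ≫ ψ (s - ε) ≫ eqToHom e := by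
    have h2 : t + ε + ε ≤ s - ε + ε := by linarith
    have hn := hψnat (t + ε) (s - ε) h1
    rw [← reassoc_of% hn, ← Category.assoc, hVW t, ← Category.assoc, ← Functor.map_comp,
        show eqToHom e = V.map (eqToHom (show (s - ε + ε : ℝ) = s by ring)) by
          rw [eqToHom_map], ← Functor.map_comp]
    congr 1
  rw [key]
  have hcomp : ∀ {A B C : ModuleCat k} (f : A ⟶ B) (g : B ⟶ C),
      LinearMap.range (f ≫ g).hom = (LinearMap.range f.hom).map g.hom := by
    intro A B C f g
    rw [ModuleCat.hom_comp, LinearMap.range_comp]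
  calc Module.finrank k ↥(LinearMap.range (φ t ≫ W.map (homOfLE h1) ≫ ψ (s-ε) ≫ eqToHom e).hom)
      ≤ Module.finrank k ↥(LinearMap.range (φ t ≫ W.map (homOfLE h1)).hom) := by
        rw [show φ t ≫ W.map (homOfLE h1) ≫ ψ (s-ε) ≫ eqToHom e =
            (φ t ≫ W.map (homOfLE h1)) ≫ (ψ (s-ε) ≫ eqToHom e) by simp]
        rw [hcomp]
        exact (Submodule.finrank_map_le _ _).trans le_rfl
    _ ≤ Module.finrank k ↥(LinearMap.range (W.map (homOfLE h1)).hom) := by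
        rw [hcomp]
        apply Submodule.finrank_mono
        rw [Submodule.map_le_iff_le_comap]
        rintro x -
        exact ⟨_, rfl⟩
end
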